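/- arXiv:1303.3231 — 5 statements merged into one kernel-verified Lean document; each statement's English description precedes it below -/
import Mathlib

section
/- Let N be a left Novikov algebra, G a commutative semigroup, and χ: G → K a quasi-character (i.e. χ(ab) − χ(ac) = χ(b) − χ(c) for all a,b,c ∈ G). Then the bracket [x⊗a, y⊗b] = (χ(a)xy − χ(b)yx)⊗ab on N ⊗ K[G] satisfies the Jacobi identity. -/
/-!
Write `χ(ab) = χ(a) + χ(b) + κ` (the quasi-character condition says exactly that this `κ` does not
depend on `a, b`), and let `D` multiply `x ⊗ a` by `χ(a)`. Then `N ⊗ K[G]` is again a left Novikov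
algebra, `D(uv) = D(u)v + uD(v) + κuv`, and the bracket is `[u, v] = D(u)v - D(v)u`. In the Jacobi
sum of such a bracket, the terms containing `D²` or `κ` cancel in pairs by right commutativity, and
the remaining terms are three instances of left symmetry applied to `D u, D v, D w`.
-/

open TensorProduct

section NovikovBracket

variable {K A : Type*} [CommSemiring K] [NonUnitalNonAssocRing A] [Module K A]
  [SMulCommClass K A A] [IsScalarTower K A A]

def novikovBracket (D : A →ₗ[K] A) : A →ₗ[K] A →ₗ[K] A :=
  LinearMap.mul K A ∘ₗ D - (LinearMap.mul K A ∘ₗ D).flip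

@[simp]
theorem novikovBracket_apply (D : A →ₗ[K] A) (u v : A) :
    novikovBracket D u v = D u * v - D v * u := rfl

theorem novikovBracket_jacobi (hls : ∀ x y z : A, associator x y z = associator y x z)
    (hrc : ∀ x y z : A, x * y * z = x * z * y) (D : A →ₗ[K] A) (κ : K)
    (hD : ∀ u v, D (u * v) = D u * v + u * D v + κ • (u * v)) (u v w : A) :
    novikovBracket D (novikovBracket D u v) w + novikovBracket D (novikovBracket D w u) v +
      novikovBracket D (novikovBracket D v w) u = 0 := by
  simp only [associator_apply] at hls
  simp only [novikovBracket_apply, LinearMap.sub_apply, map_sub, hD, add_mul, smul_mul_assoc]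
  rw [hrc (D (D u)) v w, hrc (D (D v)) w u, hrc (D (D w)) u v,
    hrc (D u) v w, hrc (D v) w u, hrc (D w) u v]
  linear_combination (norm := abel) hls (D u) (D v) w + hls (D v) (D w) u + hls (D w) (D u) v

end NovikovBracket

@[ext]
theorem TensorProduct.addMonoidHom_ext {R M N P : Type*} [CommSemiring R] [AddCommMonoid M]
    [AddCommMonoid N] [AddCommMonoid P] [Module R M] [Module R N] {f g : M ⊗[R] N →+ P}
    (h : ∀ m n, f (m ⊗ₜ n) = g (m ⊗ₜ n)) : f = g :=
  AddMonoidHom.ext fun z => z.induction_on (by simp) h fun x y hx hy => by simp [hx, hy]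

namespace Algebra.TensorProduct

variable {K N C : Type*} [CommSemiring K] [NonUnitalNonAssocRing N] [Module K N]
  [SMulCommClass K N N] [IsScalarTower K N N]

section CommAssoc

variable [NonUnitalCommSemiring C] [Module K C] [SMulCommClass K C C] [IsScalarTower K C C]

theorem associator_tmul (x y z : N) (a b c : C) :
    associator (x ⊗ₜ[K] a) (y ⊗ₜ b) (z ⊗ₜ c) = associator x y z ⊗ₜ (a * b * c) := by
  simp only [associator_apply, tmul_mul_tmul, mul_assoc, sub_tmul]

theorem associator_comm_left (h : ∀ x y z : N, associator x y z = associator y x z)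
    (u v w : N ⊗[K] C) : associator u v w = associator v u w := by
  suffices AddMonoidHom.associator = (AddMonoidHom.associator (R := N ⊗[K] C)).flip from
    congr($this u v w)
  ext x a y b z c
  simp [associator_tmul, h x y, mul_comm a b]

theorem mul_right_comm (h : ∀ x y z : N, x * y * z = x * z * y) (u v w : N ⊗[K] C) :
    u * v * w = u * w * v := by
  suffices AddMonoidHom.mulLeft₃ =
      AddMonoidHom.flipHom.comp (AddMonoidHom.mulLeft₃ (R := N ⊗[K] C)) from
    congr($this u v w)
  ext x a y b z c
  simp [tmul_mul_tmul, h x y, _root_.mul_right_comm a b]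

end CommAssoc

theorem lTensor_mul [NonUnitalNonAssocSemiring C] [Module K C] [SMulCommClass K C C]
    [IsScalarTower K C C] {D : C →ₗ[K] C} {κ : K}
    (hD : ∀ a b, D (a * b) = D a * b + a * D b + κ • (a * b)) (u v : N ⊗[K] C) :
    D.lTensor N (u * v) = D.lTensor N u * v + u * D.lTensor N v + κ • (u * v) := by
  suffices (LinearMap.mul K (N ⊗[K] C)).compr₂ (D.lTensor N) =
      LinearMap.mul K _ ∘ₗ D.lTensor N + (LinearMap.mul K _).compl₂ (D.lTensor N) +
        κ • LinearMap.mul K _ from congr($this u v)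
  ext x a y b
  simp [tmul_mul_tmul, hD, tmul_add, smul_tmul']

end Algebra.TensorProduct

namespace MonoidAlgebra

variable {K G : Type*} [CommSemiring K]

noncomputable def weight (χ : G → K) : MonoidAlgebra K G →ₗ[K] MonoidAlgebra K G :=
  (coeffLinearEquiv K).symm.toLinearMap ∘ₗ Finsupp.lsum K (fun a => χ a • Finsupp.lsingle a) ∘ₗ
    (coeffLinearEquiv K).toLinearMap

@[simp]
theorem weight_single (χ : G → K) (a : G) (r : K) : weight χ (single a r) = χ a • single a r := by
  simp [weight, -Finsupp.single_mul]

theorem weight_mul [Mul G] {χ : G → K} {κ : K} (hχ : ∀ a b, χ (a * b) = χ a + χ b + κ)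
    (f g : MonoidAlgebra K G) :
    weight χ (f * g) = weight χ f * g + f * weight χ g + κ • (f * g) := by
  suffices (LinearMap.mul K (MonoidAlgebra K G)).compr₂ (weight χ) =
      LinearMap.mul K _ ∘ₗ weight χ + (LinearMap.mul K _).compl₂ (weight χ) +
        κ • LinearMap.mul K _ from congr($this f g)
  ext a b
  simp [hχ, add_smul]

end MonoidAlgebra

theorem exists_map_mul_eq_add_add {G K : Type*} [CommSemigroup G] [AddCommGroup K] {χ : G → K}
    (hχ : ∀ a b c, χ (a * b) - χ (a * c) = χ b - χ c) :
    ∃ κ, ∀ a b, χ (a * b) = χ a + χ b + κ := by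
  rcases isEmpty_or_nonempty G with _ | ⟨⟨g⟩⟩
  · exact ⟨0, fun a => isEmptyElim a⟩
  refine ⟨χ (g * g) - χ g - χ g, fun a b => ?_⟩
  have h₁ := hχ a b g
  rw [mul_comm a g] at h₁
  linear_combination (norm := abel) h₁ + hχ g a g

/-- For a left Novikov algebra `N`, a commutative semigroup `G` and a
quasi-character `χ : G → K`, the bracket
`[x ⊗ a, y ⊗ b] = (χ(a)·xy - χ(b)·yx) ⊗ ab` on `N ⊗ K[G]` satisfies the Jacobi
identity. -/
theorem novikov_quasiCharacter_jacobi (K : Type*) [Field K]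
    (N : Type*) [NonUnitalNonAssocRing N] [Module K N]
    [SMulCommClass K N N] [IsScalarTower K N N]
    (hN1 : ∀ x y z : N, (x*y)*z - x*(y*z) = (y*x)*z - y*(x*z))
    (hN2 : ∀ x y z : N, (x*y)*z = (x*z)*y)
    (G : Type*) [CommSemigroup G] (χ : G → K)
    (hχ : ∀ a b c : G, χ (a*b) - χ (a*c) = χ b - χ c) :
    ∃ B : N ⊗[K] MonoidAlgebra K G →ₗ[K] N ⊗[K] MonoidAlgebra K G →ₗ[K]
        N ⊗[K] MonoidAlgebra K G,
      (∀ (x y : N) (a b : G),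
        B (x ⊗ₜ MonoidAlgebra.single a 1) (y ⊗ₜ MonoidAlgebra.single b 1)
          = (χ a • (x*y) - χ b • (y*x)) ⊗ₜ MonoidAlgebra.single (a*b) 1) ∧
      (∀ u v w, B (B u v) w + B (B w u) v + B (B v w) u = 0) := by
  obtain ⟨κ, hκ⟩ := exists_map_mul_eq_add_add hχ
  refine ⟨novikovBracket ((MonoidAlgebra.weight χ).lTensor N), fun x y a b => ?_,
    novikovBracket_jacobi (Algebra.TensorProduct.associator_comm_left hN1)
      (Algebra.TensorProduct.mul_right_comm hN2) _ κ
      (Algebra.TensorProduct.lTensor_mul (MonoidAlgebra.weight_mul hκ))⟩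
  simp only [novikovBracket_apply, LinearMap.lTensor_tmul, MonoidAlgebra.weight_single, tmul_smul,
    smul_mul_assoc, Algebra.TensorProduct.tmul_mul_tmul, MonoidAlgebra.single_mul_single, one_mul,
    mul_comm b a, smul_tmul', sub_tmul]
end

section
/- Let G be a commutative semigroup and χ: G → K a quasi-character. Then the semigroup algebra K[G] with the new multiplication a · b = χ(a)ab (for a,b ∈ G, extended bilinearly) is a right Novikov algebra. -/
/-!
Let `D` be the linear map `a ↦ χ(a) a` on `K[G]`, so that `x · y = D(x) y` in the usual
commutative semigroup algebra. Left commutativity of `·` is then commutativity of `K[G]`, and the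
associator `(x · y) · z - x · (y · z)` equals `(D(D x * y) - D x * D y) * z`. On basis elements
`(D(ab) - a D(b)) c = (χ(ab) - χ(b)) abc`, which is symmetric in `b` and `c` precisely by the
quasi-character identity.
-/

theorem right_novikov_of_mul_sub_mul_comm {A : Type*} [NonUnitalCommRing A] (D : A → A)
    (hD : ∀ u v w, (D (u * v) - u * D v) * w = (D (u * w) - u * D w) * v) (x y z : A) :
    D (D x * y) * z - D x * (D y * z) = D (D x * z) * y - D x * (D z * y) :=
  calc D (D x * y) * z - D x * (D y * z) = (D (D x * y) - D x * D y) * z := by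
        rw [sub_mul, mul_assoc]
    _ = (D (D x * z) - D x * D z) * y := hD _ _ _
    _ = D (D x * z) * y - D x * (D z * y) := by rw [sub_mul, mul_assoc]

namespace MonoidAlgebra

section Twist

variable {K G : Type*} [CommSemiring K]

noncomputable def twist (χ : G → K) : MonoidAlgebra K G →ₗ[K] MonoidAlgebra K G :=
  (basis G K).constr K fun a ↦ χ a • single a 1

theorem twist_single (χ : G → K) (a : G) (r : K) : twist χ (single a r) = single a (χ a * r) := by
  rw [← mul_one r, ← smul_eq_mul, ← smul_single, map_smul, twist, ← basis_apply,
    Module.Basis.constr_basis]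
  simp [smul_single, mul_comm]

end Twist

variable {K G : Type*} [CommRing K] [CommSemigroup G]

theorem twist_mul_sub_mul_twist_single (χ : G → K) (a b c : G) (r s t : K) :
    (twist χ (single a r * single b s) - single a r * twist χ (single b s)) * single c t
      = single (a * b * c) ((χ (a * b) - χ b) * (r * s * t)) := by
  simp only [single_mul_single, twist_single, ← single_sub]
  congr 1; ring

theorem twist_mul_sub_mul_twist_mul_comm (χ : G → K)
    (hχ : ∀ a b c : G, χ (a * b) - χ (a * c) = χ b - χ c) (u v w : MonoidAlgebra K G) :
    (twist χ (u * v) - u * twist χ v) * w = (twist χ (u * w) - u * twist χ w) * v := by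
  induction u using MonoidAlgebra.induction_linear with
  | zero => simp
  | add p q hp hq => simp only [add_mul, map_add, add_sub_add_comm, hp, hq]
  | single a r =>
  induction v using MonoidAlgebra.induction_linear with
  | zero => simp
  | add p q hp hq => simp only [mul_add, map_add, add_sub_add_comm, add_mul, hp, hq]
  | single b s =>
  induction w using MonoidAlgebra.induction_linear with
  | zero => simp
  | add p q hp hq => simp only [mul_add, map_add, add_sub_add_comm, add_mul, hp, hq]
  | single c t =>
  rw [twist_mul_sub_mul_twist_single, twist_mul_sub_mul_twist_single, mul_right_comm,
    sub_eq_sub_iff_sub_eq_sub.mp (hχ a b c), mul_right_comm r]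

end MonoidAlgebra

/-- For a commutative semigroup `G` and a quasi-character `χ : G → K`, the
semigroup algebra `K[G]` with new multiplication `a · b = χ(a)·ab` is a right
Novikov algebra. -/
theorem quasiCharacter_rightNovikov (K : Type*) [Field K]
    (G : Type*) [CommSemigroup G] (χ : G → K)
    (hχ : ∀ a b c : G, χ (a*b) - χ (a*c) = χ b - χ c) :
    ∃ m : MonoidAlgebra K G →ₗ[K] MonoidAlgebra K G →ₗ[K] MonoidAlgebra K G,
      (∀ a b : G,
        m (MonoidAlgebra.single a 1) (MonoidAlgebra.single b 1)
          = χ a • MonoidAlgebra.single (a*b) 1) ∧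
      (∀ x y z, m (m x y) z - m x (m y z) = m (m x z) y - m x (m z y)) ∧
      (∀ x y z, m x (m y z) = m y (m x z)) := by
  refine ⟨LinearMap.mul K _ ∘ₗ MonoidAlgebra.twist χ, fun a b ↦ ?_, fun x y z ↦ ?_,
    fun x y z ↦ mul_left_comm _ _ _⟩
  · simp [MonoidAlgebra.twist_single, MonoidAlgebra.single_mul_single, MonoidAlgebra.smul_single]
  · exact right_novikov_of_mul_sub_mul_comm _
      (MonoidAlgebra.twist_mul_sub_mul_twist_mul_comm χ hχ) x y z
end

section
/- For n ≥ 2 over a field K of characteristic zero, the bilinear map X ⋆ Y = ½(XY + YX) − (1/n)Tr(XY)·E on sl_n(K) is a commutative Poisson structure: it takes values in sl_n(K), is symmetric, and satisfies [Z, X⋆Y] = [Z,X]⋆Y + X⋆[Z,Y] for all traceless X, Y, Z. -/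
/-!
Every inner derivation `ad Z` of an associative algebra is a derivation of the Jordan product
`½(XY + YX)`. The correction term of `⋆` is a scalar matrix, hence central, and its contributions
on the right-hand side cancel because `tr([Z,X]Y + X[Z,Y]) = tr [Z, XY] = 0`. Subtracting it makes
the product traceless once `2` and `n` are invertible.
-/

theorem commutator_leibniz_anticommutator {A : Type*} [Ring A] (X Y Z : A) :
    Z * (X * Y + Y * X) - (X * Y + Y * X) * Z
      = ((Z * X - X * Z) * Y + Y * (Z * X - X * Z))
        + (X * (Z * Y - Y * Z) + (Z * Y - Y * Z) * X) := by
  noncomm_ring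

namespace Matrix

variable {ι K : Type*} [Fintype ι]

theorem trace_commutator_mul_add_mul_commutator {R : Type*} [CommRing R]
    (X Y Z : Matrix ι ι R) :
    ((Z * X - X * Z) * Y).trace + (X * (Z * Y - Y * Z)).trace = 0 := by
  simp only [sub_mul, mul_sub, trace_sub, mul_assoc, trace_mul_comm Z (X * Y)]
  ring

variable [DecidableEq ι] [Field K]

def tracelessJordan (X Y : Matrix ι ι K) : Matrix ι ι K :=
  (2 : K)⁻¹ • (X * Y + Y * X) - ((Fintype.card ι : K)⁻¹ * (X * Y).trace) • 1

theorem trace_tracelessJordan (h2 : (2 : K) ≠ 0) (hι : (Fintype.card ι : K) ≠ 0)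
    (X Y : Matrix ι ι K) : (tracelessJordan X Y).trace = 0 := by
  simp only [tracelessJordan, trace_sub, trace_smul, trace_add, trace_one, trace_mul_comm Y X,
    smul_eq_mul]
  field_simp
  ring

theorem tracelessJordan_comm (X Y : Matrix ι ι K) : tracelessJordan X Y = tracelessJordan Y X := by
  rw [tracelessJordan, tracelessJordan, trace_mul_comm, add_comm (X * Y)]

theorem commutator_tracelessJordan (X Y Z : Matrix ι ι K) :
    Z * tracelessJordan X Y - tracelessJordan X Y * Z
      = tracelessJordan (Z * X - X * Z) Y + tracelessJordan X (Z * Y - Y * Z) := by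
  have hscalar : ((Fintype.card ι : K)⁻¹ * ((Z * X - X * Z) * Y).trace) • (1 : Matrix ι ι K)
      + ((Fintype.card ι : K)⁻¹ * (X * (Z * Y - Y * Z)).trace) • 1 = 0 := by
    rw [← add_smul, ← mul_add, trace_commutator_mul_add_mul_commutator, mul_zero, zero_smul]
  simp only [tracelessJordan]
  rw [sub_add_sub_comm, hscalar, sub_zero, mul_sub, sub_mul, smul_one_mul, mul_smul_one,
    sub_sub_sub_cancel_right, mul_smul_comm, smul_mul_assoc, ← smul_sub, ← smul_add,
    commutator_leibniz_anticommutator]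

end Matrix

/-- For `n ≥ 2` and `char K = 0`, the map
`X ⋆ Y = ½(XY + YX) - (1/n)Tr(XY)·E` is a commutative Poisson structure on
`sl_n(K)`: it is `sl_n`-valued, symmetric, and satisfies the Leibniz
compatibility with the commutator bracket. -/
theorem sln_standard_poisson (K : Type*) [Field K] [CharZero K]
    (n : ℕ) (hn : 2 ≤ n)
    (star : Matrix (Fin n) (Fin n) K → Matrix (Fin n) (Fin n) K →
      Matrix (Fin n) (Fin n) K)
    (hstar : ∀ X Y, star X Y
      = (2:K)⁻¹ • (X * Y + Y * X) - ((n:K)⁻¹ * (X * Y).trace) • 1) :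
    ∀ X Y Z : Matrix (Fin n) (Fin n) K,
      X.trace = 0 → Y.trace = 0 → Z.trace = 0 →
      (star X Y).trace = 0 ∧
      star X Y = star Y X ∧
      Z * star X Y - star X Y * Z
        = star (Z * X - X * Z) Y + star X (Z * Y - Y * Z) := by
  obtain rfl : star = Matrix.tracelessJordan := by
    funext X Y; rw [hstar, Matrix.tracelessJordan, Fintype.card_fin]
  have hn0 : (Fintype.card (Fin n) : K) ≠ 0 := by
    rw [Fintype.card_fin]; exact Nat.cast_ne_zero.mpr (by omega)
  exact fun X Y Z _ _ _ => ⟨Matrix.trace_tracelessJordan two_ne_zero hn0 X Y,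
    Matrix.tracelessJordan_comm X Y, Matrix.commutator_tracelessJordan X Y Z⟩
end

section
/- Let L be a Lie algebra, A a commutative associative unital algebra, M an L-module, and V a unital A-module. The maps ξ: C^n(L,M)⊗V → C^n(L⊗A, M⊗V) defined by ξ(φ⊗v)(x₁⊗a₁, …, x_n⊗a_n) = φ(x₁,…,x_n) ⊗ (a₁⋯a_n)·v commute with the Chevalley–Eilenberg differentials, i.e. form a morphism of cochain complexes. -/
/-!
Every term of the Chevalley–Eilenberg differential of `ξ(φ ⊗ v)` carries the same
`A`-coefficient `a₁ ⋯ aₙ₊₁`: the action terms multiply the omitted `aᵢ` back into the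
product, and the bracket terms replace `aᵢ` and `aⱼ` by the single factor `aᵢ aⱼ`.
Pulling this common coefficient out of the tensor product leaves `d_L φ`.
-/

open TensorProduct

theorem Fin.prod_update_succAbove_mul {α : Type*} [CommMonoid α] {n : ℕ} (f : Fin (n + 1) → α)
    (j : Fin (n + 1)) (i : Fin n) :
    ∏ k, Function.update (f ∘ j.succAbove) i (f (j.succAbove i) * f j) k = ∏ k, f k := by
  rw [Finset.prod_update_of_mem (Finset.mem_univ i), Finset.sdiff_singleton_eq_erase,
    Fin.prod_univ_succAbove f j, ← Finset.mul_prod_erase _ _ (Finset.mem_univ i)]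
  simp only [Function.comp_apply]
  ac_rfl

theorem xi_cochain_morphism_general (K : Type*) [Field K]
    (L : Type*) [LieRing L] [LieAlgebra K L]
    (A : Type*) [CommRing A]
    (M : Type*) [AddCommGroup M] [Module K M] [LieRingModule L M]
    (V : Type*) [AddCommGroup V] [Module K V] [Module A V]
    (n : ℕ) (φ : AlternatingMap K L M (Fin n)) (v : V) :
    ∀ (x : Fin (n+1) → L) (a : Fin (n+1) → A),
      ((∑ i : Fin (n+1), (-1:ℤ)^(i:ℕ) •
          (⁅x i, φ (x ∘ i.succAbove)⁆
            ⊗ₜ[K] (a i • ((∏ k : Fin n, (a ∘ i.succAbove) k) • v))))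
        + ∑ j : Fin (n+1), ∑ i : Fin (n+1),
            if h : (i : ℕ) < (j : ℕ) then
              (-1:ℤ)^(j:ℕ) •
                (φ (Function.update (x ∘ j.succAbove)
                      ⟨i, h.trans_le (Nat.lt_succ_iff.mp j.isLt)⟩ ⁅x i, x j⁆)
                  ⊗ₜ[K]
                  ((∏ k : Fin n, Function.update (a ∘ j.succAbove)
                      ⟨i, h.trans_le (Nat.lt_succ_iff.mp j.isLt)⟩ (a i * a j) k) • v))
            else 0)
      =
      ((∑ i : Fin (n+1), (-1:ℤ)^(i:ℕ) • ⁅x i, φ (x ∘ i.succAbove)⁆)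
        + ∑ j : Fin (n+1), ∑ i : Fin (n+1),
            if h : (i : ℕ) < (j : ℕ) then
              (-1:ℤ)^(j:ℕ) •
                φ (Function.update (x ∘ j.succAbove)
                    ⟨i, h.trans_le (Nat.lt_succ_iff.mp j.isLt)⟩ ⁅x i, x j⁆)
            else 0)
        ⊗ₜ[K] ((∏ i : Fin (n+1), a i) • v) := by
  intro x a
  have hprod_succAbove (i : Fin (n + 1)) :
      a i • ((∏ k, (a ∘ i.succAbove) k) • v) = (∏ k, a k) • v := by
    rw [smul_smul, Function.comp_def, ← Fin.prod_univ_succAbove]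
  have hprod_update (j i : Fin (n + 1)) (h : (i : ℕ) < j) :
      ∏ k, Function.update (a ∘ j.succAbove) ⟨i, h.trans_le (Nat.lt_succ_iff.mp j.isLt)⟩
        (a i * a j) k = ∏ k, a k := by
    have := Fin.prod_update_succAbove_mul a j (i.castPred (Fin.ne_last_of_lt h))
    rwa [Fin.succAbove_castPred_of_lt j i h] at this
  simp only [hprod_succAbove, add_tmul, sum_tmul, smul_tmul',
    apply_dite (· ⊗ₜ[K] ((∏ k, a k) • v)), zero_tmul]
  simp +contextual only [hprod_update]

/-- The map `ξ(φ ⊗ v)(x₁⊗a₁, …, xₙ⊗aₙ) = φ(x₁,…,xₙ) ⊗ (a₁⋯aₙ)·v` commutes with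
the Chevalley–Eilenberg differentials: on pure tensors,
`d_{L⊗A}(ξ(φ ⊗ v)) = ξ(d_L φ ⊗ v)`, where the differential of `ξ(φ ⊗ v)` is
given by the standard formula for the current Lie algebra `L ⊗ A` acting on
`M ⊗ V`. -/
theorem xi_cochain_morphism (K : Type*) [Field K]
    (L : Type*) [LieRing L] [LieAlgebra K L]
    (A : Type*) [CommRing A] [Algebra K A]
    (M : Type*) [AddCommGroup M] [Module K M] [LieRingModule L M] [LieModule K L M]
    (V : Type*) [AddCommGroup V] [Module K V] [Module A V] [IsScalarTower K A V]
    (n : ℕ) (φ : AlternatingMap K L M (Fin n)) (v : V) :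
    ∀ (x : Fin (n+1) → L) (a : Fin (n+1) → A),
      ((∑ i : Fin (n+1), (-1:ℤ)^(i:ℕ) •
          (⁅x i, φ (x ∘ i.succAbove)⁆
            ⊗ₜ[K] (a i • ((∏ k : Fin n, (a ∘ i.succAbove) k) • v))))
        + ∑ j : Fin (n+1), ∑ i : Fin (n+1),
            if h : (i : ℕ) < (j : ℕ) then
              (-1:ℤ)^(j:ℕ) •
                (φ (Function.update (x ∘ j.succAbove)
                      ⟨i, h.trans_le (Nat.lt_succ_iff.mp j.isLt)⟩ ⁅x i, x j⁆)
                  ⊗ₜ[K]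
                  ((∏ k : Fin n, Function.update (a ∘ j.succAbove)
                      ⟨i, h.trans_le (Nat.lt_succ_iff.mp j.isLt)⟩ (a i * a j) k) • v))
            else 0)
      =
      ((∑ i : Fin (n+1), (-1:ℤ)^(i:ℕ) • ⁅x i, φ (x ∘ i.succAbove)⁆)
        + ∑ j : Fin (n+1), ∑ i : Fin (n+1),
            if h : (i : ℕ) < (j : ℕ) then
              (-1:ℤ)^(j:ℕ) •
                φ (Function.update (x ∘ j.succAbove)
                    ⟨i, h.trans_le (Nat.lt_succ_iff.mp j.isLt)⟩ ⁅x i, x j⁆)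
            else 0)
        ⊗ₜ[K] ((∏ i : Fin (n+1), a i) • v) :=
  xi_cochain_morphism_general K L A M V n φ v
end

section
/- Let L be a perfect Lie algebra ([L,L] = L) and A a commutative associative unital algebra, with one of L, A finite-dimensional. Then the centroid of the current Lie algebra L⊗A is isomorphic to Cent(L)⊗A; explicitly, every centroidal map of L⊗A is a sum of maps of the form x⊗a ↦ φ(x)⊗(au) with φ ∈ Cent(L) and u ∈ A. -/
open TensorProduct

/-!
Write `Φ (x ⊗ 1) = ∑ⱼ ψⱼ x ⊗ cⱼ` in a basis `(cⱼ)` of `A`; the finiteness hypothesis makes a single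
finite set of indices `j` serve for every `x`. Since `⁅x, y⁆ ⊗ a` is the bracket of `x ⊗ a` with
`y ⊗ 1`, the centroid property of `Φ` gives `Φ (⁅x, y⁆ ⊗ a) = ∑ⱼ ⁅x, ψⱼ y⁆ ⊗ a cⱼ`. Reading off
coordinates at `a = 1` shows that each `ψⱼ` lies in the centroid of `L`, and then
`Φ = ∑ⱼ ψⱼ ⊗ (· * cⱼ)` on all `⁅x, y⁆ ⊗ a`, which span `L ⊗ A` because `L` is perfect.
-/

theorem Finsupp.exists_finset_forall_support_subset {R M N ι : Type*} [Semiring R]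
    [AddCommMonoid M] [Module R M] [Module.Finite R M] [AddCommMonoid N] [Module R N]
    (f : M →ₗ[R] ι →₀ N) : ∃ s : Finset ι, ∀ x, (f x).support ⊆ s := by
  classical
  obtain ⟨S, hS⟩ := Module.Finite.fg_top (R := R) (M := M)
  set t := S.biUnion fun m => (f m).support
  have hmap : (⊤ : Submodule R M).map f ≤ Finsupp.supported N R ↑t := by
    rw [← hS, Submodule.map_span_le]
    exact fun m hm => (Finsupp.mem_supported R _).2 <|
      Finset.coe_subset.2 <| Finset.subset_biUnion_of_mem (fun m => (f m).support) hm
  exact ⟨t, fun x => Finset.coe_subset.1 <| (Finsupp.mem_supported R _).1 <|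
    hmap (Submodule.mem_map_of_mem Submodule.mem_top)⟩

namespace TensorProduct

section Basis

variable {R M N ι : Type*} [CommSemiring R] [AddCommMonoid M] [Module R M]
  [AddCommMonoid N] [Module R N] [DecidableEq ι] (c : Module.Basis ι R N)

theorem equivFinsuppOfBasisRight_tmul_basis (m : M) (i : ι) :
    equivFinsuppOfBasisRight c (m ⊗ₜ c i) = Finsupp.single i m := by
  rw [equivFinsuppOfBasisRight_apply_tmul, Module.Basis.repr_self, Finsupp.mapRange_single,
    one_smul]

theorem equivFinsuppOfBasisRight_sum_tmul_basis_apply (s : Finset ι) (m : ι → M) {j : ι}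
    (hj : j ∈ s) : equivFinsuppOfBasisRight c (∑ i ∈ s, m i ⊗ₜ c i) j = m j := by
  simp only [map_sum, equivFinsuppOfBasisRight_tmul_basis, Finsupp.finsetSum_apply,
    Finsupp.single_apply, Finset.sum_ite_eq', if_pos hj]

theorem eq_sum_tmul_basis_of_support_subset {w : M ⊗[R] N} {s : Finset ι}
    (hw : (equivFinsuppOfBasisRight c w).support ⊆ s) :
    w = ∑ j ∈ s, equivFinsuppOfBasisRight c w j ⊗ₜ c j := by
  conv_lhs => rw [← (equivFinsuppOfBasisRight c).symm_apply_apply w]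
  rw [equivFinsuppOfBasisRight_symm_apply, Finsupp.sum_of_support_subset _ hw]
  exact fun _ _ => zero_tmul _ _

end Basis

theorem ext_lie_tmul_of_derivedSeries_eq_top {R L A P : Type*} [CommRing R] [LieRing L]
    [LieAlgebra R L] [AddCommGroup A] [Module R A] [AddCommGroup P] [Module R P]
    (hperf : LieAlgebra.derivedSeries R L 1 = ⊤) {f g : L ⊗[R] A →ₗ[R] P}
    (hfg : ∀ (x y : L) (a : A), f (⁅x, y⁆ ⊗ₜ a) = g (⁅x, y⁆ ⊗ₜ a)) : f = g := by
  have hspan : Submodule.span R {⁅x, y⁆ | (x : L) (y : L)} = ⊤ := by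
    rw [← LieAlgebra.coe_derivedSeries_one_eq, hperf]
    rfl
  refine ext' fun z a => LinearMap.congr_fun (LinearMap.ext_on hspan
    (f := f ∘ₗ (mk R L A).flip a) (g := g ∘ₗ (mk R L A).flip a) ?_) z
  rintro _ ⟨x, y, rfl⟩
  exact hfg x y a

end TensorProduct

/-- For a perfect Lie algebra `L` and a commutative unital algebra `A` (one of
them finite-dimensional), every centroidal map of the current Lie algebra
`L ⊗ A` is a sum of maps `x ⊗ a ↦ φ(x) ⊗ au` with `φ ∈ Cent(L)`, `u ∈ A`;
hence `Cent(L ⊗ A) ≅ Cent(L) ⊗ A`. -/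
theorem centroid_current_perfect (K : Type*) [Field K]
    (L : Type*) [LieRing L] [LieAlgebra K L]
    (A : Type*) [CommRing A] [Algebra K A]
    (hperf : LieAlgebra.derivedSeries K L 1 = ⊤)
    (hfin : FiniteDimensional K L ∨ FiniteDimensional K A)
    (Br : L ⊗[K] A →ₗ[K] L ⊗[K] A →ₗ[K] L ⊗[K] A)
    (hBr : ∀ (x y : L) (a b : A), Br (x ⊗ₜ a) (y ⊗ₜ b) = ⁅x, y⁆ ⊗ₜ (a * b))
    (Φ : L ⊗[K] A →ₗ[K] L ⊗[K] A)
    (hΦ : ∀ u w, Φ (Br u w) = Br u (Φ w)) :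
    ∃ (k : ℕ) (φ : Fin k → (L →ₗ[K] L)) (u : Fin k → A),
      (∀ i, ∀ x y : L, (φ i) ⁅x, y⁆ = ⁅x, (φ i) y⁆) ∧
      Φ = ∑ i, TensorProduct.map (φ i) (LinearMap.mulRight K (u i)) := by
  classical
  let c := Module.Basis.ofVectorSpace K A
  let E := equivFinsuppOfBasisRight (M := L) c
  let Ψ : L →ₗ[K] _ := E.toLinearMap ∘ₗ Φ ∘ₗ (mk K L A).flip 1
  let ψ j : L →ₗ[K] L := Finsupp.lapply j ∘ₗ Ψ
  obtain ⟨s, hs⟩ : ∃ s : Finset _, ∀ x, (E (Φ (x ⊗ₜ 1))).support ⊆ s := by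
    rcases hfin with _ | _
    · exact Finsupp.exists_finset_forall_support_subset Ψ
    · have := Module.Finite.finite_basis c
      let := Fintype.ofFinite (Module.Basis.ofVectorSpaceIndex K A)
      exact ⟨Finset.univ, fun _ => Finset.subset_univ _⟩
  have hbr (x y : L) (a : A) : Φ (⁅x, y⁆ ⊗ₜ a) = ∑ j ∈ s, ⁅x, ψ j y⁆ ⊗ₜ (a * c j) := by
    rw [← mul_one a, ← hBr, hΦ, eq_sum_tmul_basis_of_support_subset c (hs y), map_sum, mul_one]
    exact Finset.sum_congr rfl fun j _ => hBr x _ a _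
  have hcent : ∀ j ∈ s, ∀ x y : L, ψ j ⁅x, y⁆ = ⁅x, ψ j y⁆ := fun j hj x y =>
    calc ψ j ⁅x, y⁆ = E (Φ (⁅x, y⁆ ⊗ₜ 1)) j := rfl
      _ = E (∑ i ∈ s, ⁅x, ψ i y⁆ ⊗ₜ c i) j := by simp only [hbr, one_mul]
      _ = ⁅x, ψ j y⁆ := equivFinsuppOfBasisRight_sum_tmul_basis_apply c s _ hj
  have hΦ_eq : Φ = ∑ j ∈ s, map (ψ j) (LinearMap.mulRight K (c j)) :=
    ext_lie_tmul_of_derivedSeries_eq_top hperf fun x y a => by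
      rw [hbr, LinearMap.sum_apply]
      exact Finset.sum_congr rfl fun j hj => by rw [map_tmul, LinearMap.mulRight_apply, hcent j hj]
  refine ⟨s.card, fun i => ψ (s.equivFin.symm i), fun i => c (s.equivFin.symm i),
    fun i => hcent _ (s.equivFin.symm i).2, ?_⟩
  rw [hΦ_eq, ← s.sum_coe_sort]
  exact (Equiv.sum_comp s.equivFin.symm fun j => map (ψ j) (LinearMap.mulRight K (c j))).symm
end
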